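/- Let T_0 be a triangulation of a finite set P of points in the plane and let F = ⟨f_1,…,f_r⟩ be a valid sequence of flips with respect to T_0. Then every node of D_F has indegree at most 5, and consequently the number of arcs of D_F is at most 5 times the number of nodes of D_F. -/

import Mathlib

/-- A point in the plane. -/
abbrev Pt := ℝ × ℝ

/-- An edge is an (unordered) pair of points, modeled as a finite set of points
(of cardinality 2 whenever relevant). -/
abbrev Edge := Finset Pt

/-- A triangulation of a finite point set `P` in the plane: a set of (nondegenerate)
triangles with vertices in `P`, whose union is the convex hull of `P`, whose interiors
are pairwise disjoint, and such that every point of `P` is a vertex of some triangle.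
Each triangle is modeled by its vertex set (a 3-element finset). -/
structure Triangulation (P : Finset Pt) where
  triangles : Finset (Finset Pt)
  card_eq : ∀ T ∈ triangles, T.card = 3
  not_collinear : ∀ T ∈ triangles, ¬ Collinear ℝ (T : Set Pt)
  vertices_subset : ∀ T ∈ triangles, (T : Set Pt) ⊆ (P : Set Pt)
  covers : (⋃ T ∈ triangles, convexHull ℝ (T : Set Pt)) = convexHull ℝ (P : Set Pt)
  interiors_disjoint : ∀ T₁ ∈ triangles, ∀ T₂ ∈ triangles, T₁ ≠ T₂ →
    interior (convexHull ℝ (T₁ : Set Pt)) ∩ interior (convexHull ℝ (T₂ : Set Pt)) = ∅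
  mem_vertex : ∀ p ∈ P, ∃ T ∈ triangles, p ∈ T

/-- `e` is an edge (a side of some triangle) of the triangulation `𝒯`. -/
def Triangulation.IsEdge {P : Finset Pt} (𝒯 : Triangulation P) (e : Edge) : Prop :=
  e.card = 2 ∧ ∃ T ∈ 𝒯.triangles, e ⊆ T

/-- The edges `e` and `e'` are both sides of one triangle of `𝒯`. -/
def Triangulation.BothInTriangle {P : Finset Pt} (𝒯 : Triangulation P) (e e' : Edge) : Prop :=
  e.card = 2 ∧ e'.card = 2 ∧ ∃ T ∈ 𝒯.triangles, e ⊆ T ∧ e' ⊆ T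

/-- The two distinct edges `e` and `e'` share a triangle in `𝒯`. -/
def Triangulation.ShareTriangle {P : Finset Pt} (𝒯 : Triangulation P) (e e' : Edge) : Prop :=
  e ≠ e' ∧ 𝒯.BothInTriangle e e'

/-- A flip: it removes the underlying edge `old` (the edge `ε(f)`) and creates the
new edge `new` (the edge `φ(f)`). -/
structure Flip where
  old : Edge
  new : Edge

/-- The flip `f` is admissible in the triangulation `𝒯` and performing it in `𝒯`
yields the triangulation `𝒯'`: the underlying edge `f.old` is an interior edge of `𝒯`,
i.e. a side of exactly two triangles `T₁ ≠ T₂` of `𝒯`, the quadrilateral `T₁ ∪ T₂`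
they form is convex (has four vertices, each in convex position), `f.new` is the other
diagonal of this quadrilateral, and `𝒯'` is obtained from `𝒯` by replacing `T₁, T₂`
by the two triangles of the quadrilateral determined by the new diagonal. -/
def FlipStep {P : Finset Pt} (𝒯 : Triangulation P) (f : Flip) (𝒯' : Triangulation P) : Prop :=
  ∃ T₁ ∈ 𝒯.triangles, ∃ T₂ ∈ 𝒯.triangles, T₁ ≠ T₂ ∧
    f.old.card = 2 ∧ f.old ⊆ T₁ ∧ f.old ⊆ T₂ ∧
    (∀ T ∈ 𝒯.triangles, f.old ⊆ T → T = T₁ ∨ T = T₂) ∧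
    (T₁ ∪ T₂).card = 4 ∧
    (∀ p ∈ T₁ ∪ T₂, p ∉ convexHull ℝ (((T₁ ∪ T₂).erase p : Finset Pt) : Set Pt)) ∧
    f.new = (T₁ ∪ T₂) \ f.old ∧
    𝒯'.triangles = (𝒯.triangles \ {T₁, T₂}) ∪ f.old.image (fun p => insert p f.new)

/-- A valid sequence of `r` flips with respect to the triangulation `tri 0`,
together with the intermediate triangulations: flip `i` (the `(i+1)`-st flip) is
admissible in `tri i` and performing it yields `tri (i+1)`. The sequence transforms
`tri 0` into `tri (Fin.last r)`. -/
structure FlipSeq (P : Finset Pt) (r : ℕ) where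
  tri : Fin (r + 1) → Triangulation P
  flips : Fin r → Flip
  step : ∀ i : Fin r, FlipStep (tri i.castSucc) (flips i) (tri i.succ)

/-- The arc relation of the DAG `D_F`: there is an arc `fᵢ → fⱼ` iff `i < j`,
(1) `φ(fᵢ) = ε(fⱼ)` or `φ(fᵢ)` and `ε(fⱼ)` share a triangle in `T_{j-1}`, and
(2) no flip strictly between them has underlying edge `φ(fᵢ)`. -/
def FlipSeq.Arc {P : Finset Pt} {r : ℕ} (S : FlipSeq P r) (i j : Fin r) : Prop :=
  i < j ∧
  ((S.flips i).new = (S.flips j).old ∨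
    (S.tri j.castSucc).ShareTriangle (S.flips i).new (S.flips j).old) ∧
  ∀ p : Fin r, i < p → p < j → (S.flips p).old ≠ (S.flips i).new

/-- Two flips lie in the same weakly connected component of `D_F`. -/
def FlipSeq.SameComponent {P : Finset Pt} {r : ℕ} (S : FlipSeq P r) : Fin r → Fin r → Prop :=
  Relation.ReflTransGen (fun a b => S.Arc a b ∨ S.Arc b a)

/-- A solution `F` is normalized if the flips belonging to each weakly connected
component of `D_F` appear consecutively in `F`. -/
def FlipSeq.Normalized {P : Finset Pt} {r : ℕ} (S : FlipSeq P r) : Prop :=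
  ∀ i p j : Fin r, i ≤ p → p ≤ j → S.SameComponent i j → S.SameComponent i p

/-- `S` is a solution to the Flip Distance instance `(Tinit, Tfinal, k)`: a valid
sequence of `k` flips transforming `Tinit` into `Tfinal` such that no valid sequence
of fewer flips does so, i.e. `k` is the flip distance. -/
def IsSolution {P : Finset Pt} (Tinit Tfinal : Triangulation P) (k : ℕ) (S : FlipSeq P k) : Prop :=
  S.tri 0 = Tinit ∧ S.tri (Fin.last k) = Tfinal ∧
  ∀ (k' : ℕ) (S' : FlipSeq P k'), S'.tri 0 = Tinit → S'.tri (Fin.last k') = Tfinal → k ≤ k'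

/-- Two distinct edges cross: they intersect at a point interior to both segments. -/
def EdgesCross (e e' : Edge) : Prop :=
  e ≠ e' ∧ ∃ x : Pt,
    (x ∈ convexHull ℝ (e : Set Pt) ∧ x ∉ (e : Set Pt)) ∧
    (x ∈ convexHull ℝ (e' : Set Pt) ∧ x ∉ (e' : Set Pt))

/-- The state of the nondeterministic algorithm: a current triangulation, a current
edge, and a stack of edges. -/
structure AlgState (P : Finset Pt) where
  tri : Triangulation P
  cur : Edge
  stack : List Edge

/-- One action of the nondeterministic algorithm, labeled by `none` (no flip) or
`some f` (the flip performed). The five types of actions are: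
(i) move to an edge sharing a triangle with the current edge;
(ii) flip the current edge and move to an edge that shared a triangle with it;
(iii) flip the current edge, push the created edge, and move to an edge that shared
a triangle with it;
(iv) flip the current edge and jump to the edge on the top of the stack;
(v) flip the current edge, jump to the top of the stack, and pop the stack. -/
inductive AlgStep {P : Finset Pt} : AlgState P → Option Flip → AlgState P → Prop
  | move (s : AlgState P) (e' : Edge) :
      s.tri.ShareTriangle s.cur e' →
      AlgStep s none ⟨s.tri, e', s.stack⟩
  | flipMove (s : AlgState P) (f : Flip) (𝒯' : Triangulation P) (e' : Edge) :
      f.old = s.cur → FlipStep s.tri f 𝒯' → s.tri.ShareTriangle s.cur e' →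
      AlgStep s (some f) ⟨𝒯', e', s.stack⟩
  | flipPush (s : AlgState P) (f : Flip) (𝒯' : Triangulation P) (e' : Edge) :
      f.old = s.cur → FlipStep s.tri f 𝒯' → s.tri.ShareTriangle s.cur e' →
      AlgStep s (some f) ⟨𝒯', e', f.new :: s.stack⟩
  | flipJump (s : AlgState P) (f : Flip) (𝒯' : Triangulation P) (e : Edge) (rest : List Edge) :
      f.old = s.cur → FlipStep s.tri f 𝒯' → s.stack = e :: rest →
      AlgStep s (some f) ⟨𝒯', e, s.stack⟩
  | flipJumpPop (s : AlgState P) (f : Flip) (𝒯' : Triangulation P) (e : Edge) (rest : List Edge) :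
      f.old = s.cur → FlipStep s.tri f 𝒯' → s.stack = e :: rest →
      AlgStep s (some f) ⟨𝒯', e, rest⟩

/-- A run of the nondeterministic algorithm: a sequence of actions transforming one
state into another. -/
inductive AlgRun {P : Finset Pt} : AlgState P → List (Option Flip) → AlgState P → Prop
  | nil (s : AlgState P) : AlgRun s [] s
  | cons {s s' s'' : AlgState P} {a : Option Flip} {l : List (Option Flip)} :
      AlgStep s a s' → AlgRun s' l s'' → AlgRun s (a :: l) s''

/-!
An arc `fᵢ → fⱼ` forces `φ(fᵢ)` to be `ε(fⱼ)` or a side of one of the two triangles of `T_{j-1}`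
on `ε(fⱼ)`: five edges in all. The in-neighbours of `fⱼ` have pairwise distinct new edges: if
`φ(fᵤ) = φ(fᵥ)` with `u < v`, condition (2) keeps `φ(fᵤ)` in the triangulation up to step `v`,
whereas a flip never creates an edge that is already present, since the new diagonal of a convex
quadrilateral crosses the old one, so a triangle on it would overlap a triangle on the old
diagonal. Summing indegrees bounds the number of arcs.
-/

open Set Filter Topology AffineMap

theorem Convex.inter_interior_nonempty_of_isOpen {E : Type*} [AddCommGroup E] [Module ℝ E]
    [TopologicalSpace E] [IsTopologicalAddGroup E] [ContinuousSMul ℝ E] {C U : Set E}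
    (hC : Convex ℝ C) (hCi : (interior C).Nonempty) (hU : IsOpen U) (hUC : (U ∩ C).Nonempty) :
    (U ∩ interior C).Nonempty := by
  obtain ⟨y, hyU, hyC⟩ := hUC
  have hy : y ∈ closure (interior C) := by
    rw [hC.closure_interior_eq_closure_of_nonempty_interior hCi]
    exact subset_closure hyC
  exact mem_closure_iff.1 hy U hU hyU

theorem AffineBasis.eventually_lineMap_mem_interior_convexHull {ι E : Type*} [Finite ι]
    [NormedAddCommGroup E] [NormedSpace ℝ E] (B : AffineBasis ι ℝ E) {x p : E} (k : ι)
    (hx : ∀ i ≠ k, 0 < B.coord i x) (hxk : 0 ≤ B.coord k x) (hpk : 0 < B.coord k p) :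
    ∀ᶠ t in 𝓝[>] (0 : ℝ), lineMap x p t ∈ interior (convexHull ℝ (range B)) := by
  have := B.finiteDimensional
  simp only [B.interior_convexHull, mem_ofPred_eq, (B.coord _).apply_lineMap]
  refine eventually_all.2 fun i => ?_
  rcases eq_or_ne i k with rfl | hik
  · filter_upwards [Ioo_mem_nhdsGT one_pos] with t ht
    rw [lineMap_apply_ring]
    nlinarith [mul_nonneg (sub_nonneg.2 ht.2.le) hxk, mul_pos ht.1 hpk]
  · have hcont : Continuous fun t : ℝ => lineMap (B.coord i x) (B.coord i p) t :=
      lineMap_continuous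
    have := (hcont.tendsto 0).eventually_const_lt (by simpa using hx i hik)
    exact nhdsWithin_le_nhds this

theorem AffineBasis.interior_convexHull_inter_nonempty {ι E : Type*} [Finite ι]
    [NormedAddCommGroup E] [NormedSpace ℝ E] (B : AffineBasis ι ℝ E) {C : Set E}
    (hC : Convex ℝ C) (hCi : (interior C).Nonempty) {x p : E} (hxC : x ∈ C) (hpC : p ∈ C)
    (k : ι) (hx : ∀ i ≠ k, 0 < B.coord i x) (hxk : 0 ≤ B.coord k x) (hpk : 0 < B.coord k p) :
    (interior (convexHull ℝ (range B)) ∩ interior C).Nonempty := by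
  obtain ⟨t, ht, ht1⟩ :=
    ((B.eventually_lineMap_mem_interior_convexHull k hx hxk hpk).and
      (Ioo_mem_nhdsGT one_pos)).exists
  exact hC.inter_interior_nonempty_of_isOpen hCi isOpen_interior
    ⟨_, ht, hC.lineMap_mem hxC hpC ⟨ht1.1.le, ht1.2.le⟩⟩

theorem right_mem_segment_of_eq_smul_add_smul {E : Type*} [AddCommGroup E] [Module ℝ E]
    {a b x : E} {α β : ℝ} (hαβ : α + β = 1) (hα : α ≤ 0) (hx : x = α • a + β • b) :
    b ∈ segment ℝ a x := by
  have hβ : 0 < β := by linarith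
  refine ⟨1 - β⁻¹, β⁻¹, ?_, by positivity, by ring, ?_⟩
  · rw [sub_nonneg]; exact inv_le_one_of_one_le₀ (by linarith)
  · rw [hx]
    match_scalars
    · field_simp
      linarith
    · field_simp

noncomputable def triangleBasis {a b c : Pt} (h : ¬ Collinear ℝ {a, b, c}) :
    AffineBasis (Fin 3) ℝ Pt :=
  ⟨![a, b, c], affineIndependent_iff_not_collinear_set.2 h, by
    rw [(affineIndependent_iff_not_collinear_set.2 h).affineSpan_eq_top_iff_card_eq_finrank_add_one]
    simp⟩

section triangleBasis

variable {a b c : Pt} (h : ¬ Collinear ℝ {a, b, c})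

theorem range_triangleBasis : range (triangleBasis h) = {a, b, c} := by
  change range ![a, b, c] = _
  ext
  simp only [Matrix.range_cons, Matrix.range_empty, union_empty, union_singleton, mem_union,
    mem_insert_iff, mem_singleton_iff]
  tauto

theorem triangleBasis_coord_left (i : Fin 3) :
    (triangleBasis h).coord i a = if i = 0 then 1 else 0 :=
  (triangleBasis h).coord_apply i 0

theorem triangleBasis_coord_middle (i : Fin 3) :
    (triangleBasis h).coord i b = if i = 1 then 1 else 0 :=
  (triangleBasis h).coord_apply i 1

theorem triangleBasis_coord_right (i : Fin 3) :
    (triangleBasis h).coord i c = if i = 2 then 1 else 0 :=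
  (triangleBasis h).coord_apply i 2

end triangleBasis

theorem interior_convexHull_triple_nonempty {a b c : Pt} (h : ¬ Collinear ℝ {a, b, c}) :
    (interior (convexHull ℝ {a, b, c})).Nonempty := by
  rw [← range_triangleBasis h]
  exact ⟨_, (triangleBasis h).centroid_mem_interior_convexHull⟩

/- If `d` lies on the same side of line `ab` as `c`, the triangles `abc` and `abd` overlap.
Otherwise the diagonal `cd` meets line `ab` at a point `x` which, by convex position, lies strictly
between `a` and `b`; the triangle `cdq` then contains the segment from `x` to `c`, which enters the
interior of `abc`. -/
theorem interior_triangle_inter_nonempty_of_convexPosition {a b c d q : Pt}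
    (ha : a ∉ convexHull ℝ {b, c, d}) (hb : b ∉ convexHull ℝ {a, c, d})
    (habc : ¬ Collinear ℝ {a, b, c}) (habd : ¬ Collinear ℝ {a, b, d})
    (hcdq : ¬ Collinear ℝ {c, d, q}) :
    (interior (convexHull ℝ {a, b, c}) ∩ interior (convexHull ℝ {a, b, d})).Nonempty ∨
      (interior (convexHull ℝ {a, b, c}) ∩ interior (convexHull ℝ {c, d, q})).Nonempty := by
  set B := triangleBasis habc
  rw [← range_triangleBasis habc]
  rcases lt_or_ge 0 (B.coord 2 d) with hd | hd
  · left
    refine B.interior_convexHull_inter_nonempty (convex_convexHull ℝ _)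
      (interior_convexHull_triple_nonempty habd) (x := lineMap a b (1 / 2 : ℝ))
      ((convex_convexHull ℝ _).lineMap_mem (subset_convexHull ℝ _ (by simp))
        (subset_convexHull ℝ _ (by simp)) ⟨by norm_num, by norm_num⟩)
      (subset_convexHull ℝ _ (by simp)) 2 ?_ ?_ hd
    · intro i hi
      fin_cases i <;> simp [B, apply_lineMap, lineMap_apply_ring, triangleBasis_coord_left,
        triangleBasis_coord_middle] at hi ⊢
      norm_num
    · simp [B, apply_lineMap, triangleBasis_coord_left, triangleBasis_coord_middle]
  · right
    set s := (1 - B.coord 2 d)⁻¹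
    -- the point where line `cd` meets line `ab`
    set x := lineMap c d s
    have hs : s ∈ Icc (0 : ℝ) 1 := ⟨inv_nonneg.2 (by linarith), inv_le_one_of_one_le₀ (by linarith)⟩
    have hx₂ : B.coord 2 x = 0 := by
      have hs1 : s * (1 - B.coord 2 d) = 1 := inv_mul_cancel₀ (by linarith)
      rw [apply_lineMap, lineMap_apply_ring, triangleBasis_coord_right, if_pos rfl]
      linarith
    have hxab : x = B.coord 0 x • a + B.coord 1 x • b := by
      have := B.linear_combination_coord_eq_self x
      rw [Fin.sum_univ_three, hx₂, zero_smul, add_zero] at this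
      exact this.symm
    have hsum : B.coord 0 x + B.coord 1 x = 1 := by
      have := B.sum_coord_apply_eq_one x
      rw [Fin.sum_univ_three, hx₂] at this
      linarith
    have hx₀ : 0 < B.coord 0 x := by
      by_contra! h
      have hxacd : x ∈ convexHull ℝ {a, c, d} := (convex_convexHull ℝ _).lineMap_mem
        (subset_convexHull ℝ _ (by simp)) (subset_convexHull ℝ _ (by simp)) hs
      exact hb ((convex_convexHull ℝ _).segment_subset (subset_convexHull ℝ _ (by simp)) hxacd
        (right_mem_segment_of_eq_smul_add_smul hsum h hxab))
    have hx₁ : 0 < B.coord 1 x := by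
      by_contra! h
      have hxbcd : x ∈ convexHull ℝ {b, c, d} := (convex_convexHull ℝ _).lineMap_mem
        (subset_convexHull ℝ _ (by simp)) (subset_convexHull ℝ _ (by simp)) hs
      exact ha ((convex_convexHull ℝ _).segment_subset (subset_convexHull ℝ _ (by simp)) hxbcd
        (right_mem_segment_of_eq_smul_add_smul (by linarith) h (hxab.trans (add_comm _ _))))
    refine B.interior_convexHull_inter_nonempty (convex_convexHull ℝ _)
      (interior_convexHull_triple_nonempty hcdq) (x := x) (p := c)
      ((convex_convexHull ℝ _).lineMap_mem (subset_convexHull ℝ _ (by simp))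
        (subset_convexHull ℝ _ (by simp)) hs)
      (subset_convexHull ℝ _ (by simp)) 2 ?_ hx₂.ge (by simp [B, triangleBasis_coord_right])
    intro i hi
    fin_cases i
    · exact hx₀
    · exact hx₁
    · simp at hi

theorem Finset.subset_pair_of_subset_triple {α : Type*} [DecidableEq α] {e : Finset α}
    {a b c : α} (hab : a ≠ b) (he : e ⊆ {a, b, c}) (hcard : e.card = 2) (hne : e ≠ {a, b}) :
    e ⊆ {a, c} ∨ e ⊆ {b, c} := by
  by_contra! h
  obtain ⟨x, hxe, hx⟩ := Finset.not_subset.1 h.1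
  obtain ⟨y, hye, hy⟩ := Finset.not_subset.1 h.2
  have hxb : x = b := by
    have := he hxe; simp only [Finset.mem_insert, Finset.mem_singleton] at *; tauto
  have hya : y = a := by
    have := he hye; simp only [Finset.mem_insert, Finset.mem_singleton] at *; tauto
  subst hxb hya
  exact hne (Finset.eq_of_subset_of_card_le (Finset.insert_subset hye (by simpa using hxe))
    (by rw [hcard, Finset.card_pair hab])).symm

namespace FlipStep

variable {P : Finset Pt} {𝒯 𝒯' : Triangulation P} {f : Flip}

theorem exists_quadrilateral (h : FlipStep 𝒯 f 𝒯') :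
    ∃ a b c d : Pt, a ≠ b ∧ f.old = {a, b} ∧ f.new = {c, d} ∧ c ≠ d ∧
      d ∉ ({a, b, c} : Finset Pt) ∧ {a, b, c} ∈ 𝒯.triangles ∧ {a, b, d} ∈ 𝒯.triangles ∧
      a ∉ convexHull ℝ {b, c, d} ∧ b ∉ convexHull ℝ {a, c, d} ∧
      𝒯'.triangles = (𝒯.triangles \ {{a, b, c}, {a, b, d}}) ∪ {{a, c, d}, {b, c, d}} := by
  classical
  obtain ⟨T₁, hT₁, T₂, hT₂, hne, hcard, hsub₁, hsub₂, -, -, hconv, hnew, htri⟩ := h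
  obtain ⟨a, b, hab, hold⟩ := Finset.card_eq_two.1 hcard
  obtain ⟨c, hc, rfl⟩ := Finset.exists_eq_insert_iff.2 ⟨hsub₁, by rw [hcard, 𝒯.card_eq _ hT₁]⟩
  obtain ⟨d, hd, rfl⟩ := Finset.exists_eq_insert_iff.2 ⟨hsub₂, by rw [hcard, 𝒯.card_eq _ hT₂]⟩
  rw [hold] at hc hd hconv hnew htri hT₁ hT₂ hne
  have hcd : c ≠ d := by rintro rfl; exact hne rfl
  simp only [Finset.mem_insert, Finset.mem_singleton, not_or] at hc hd
  have h₁ : (insert c {a, b} : Finset Pt) = {a, b, c} := by ext; simp; tauto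
  have h₂ : (insert d {a, b} : Finset Pt) = {a, b, d} := by ext; simp; tauto
  rw [h₁, h₂] at hconv hnew htri
  have hnew' : f.new = {c, d} := by rw [hnew]; ext; simp; grind
  have hera : (({a, b, c} ∪ {a, b, d} : Finset Pt).erase a) = {b, c, d} := by ext; simp; grind
  have herb : (({a, b, c} ∪ {a, b, d} : Finset Pt).erase b) = {a, c, d} := by ext; simp; grind
  refine ⟨a, b, c, d, hab, hold, hnew', hcd, ?_, h₁ ▸ hT₁, h₂ ▸ hT₂, ?_, ?_, ?_⟩
  · simp; grind
  · simpa only [hera, Finset.coe_insert, Finset.coe_singleton] using hconv a (by simp)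
  · simpa only [herb, Finset.coe_insert, Finset.coe_singleton] using hconv b (by simp)
  · rw [htri, hnew']; simp [Finset.image_insert]

theorem isEdge_new (h : FlipStep 𝒯 f 𝒯') : 𝒯'.IsEdge f.new := by
  obtain ⟨a, b, c, d, -, -, hnew, hcd, -, -, -, -, -, htri⟩ := h.exists_quadrilateral
  refine ⟨hnew ▸ Finset.card_pair hcd, {a, c, d}, by rw [htri]; simp, ?_⟩
  rw [hnew]
  exact Finset.subset_insert _ _

theorem isEdge_of_ne {e : Edge} (h : FlipStep 𝒯 f 𝒯') (he : 𝒯.IsEdge e) (hne : e ≠ f.old) :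
    𝒯'.IsEdge e := by
  classical
  obtain ⟨a, b, c, d, hab, hold, -, -, -, -, -, -, -, htri⟩ := h.exists_quadrilateral
  obtain ⟨hcard, T, hT, heT⟩ := he
  rw [hold] at hne
  have hflipped : ∀ x, x = c ∨ x = d → e ⊆ {a, b, x} → e ⊆ {a, c, d} ∨ e ⊆ {b, c, d} := by
    intro x hx hex
    have hsides : ({a, x} : Finset Pt) ⊆ {a, c, d} ∧ ({b, x} : Finset Pt) ⊆ {b, c, d} := by
      rcases hx with rfl | rfl <;> simp [Finset.insert_subset_iff]
    exact (Finset.subset_pair_of_subset_triple hab hex hcard hne).imp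
      (·.trans hsides.1) (·.trans hsides.2)
  refine ⟨hcard, ?_⟩
  simp only [htri, Finset.mem_union, Finset.mem_sdiff, Finset.mem_insert, Finset.mem_singleton]
  by_cases hT₁ : T = {a, b, c}
  · rcases hflipped c (.inl rfl) (hT₁ ▸ heT) with h' | h' <;> exact ⟨_, by simp, h'⟩
  by_cases hT₂ : T = {a, b, d}
  · rcases hflipped d (.inr rfl) (hT₂ ▸ heT) with h' | h' <;> exact ⟨_, by simp, h'⟩
  exact ⟨T, Or.inl ⟨hT, by simp [hT₁, hT₂]⟩, heT⟩

theorem not_isEdge_new (h : FlipStep 𝒯 f 𝒯') : ¬ 𝒯.IsEdge f.new := by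
  classical
  rintro ⟨hcard, T, hT, hsub⟩
  obtain ⟨a, b, c, d, -, -, hnew, -, hd, habc, habd, ha, hb, -⟩ := h.exists_quadrilateral
  rw [hnew] at hcard hsub
  obtain ⟨q, -, rfl⟩ := Finset.exists_eq_insert_iff.2 ⟨hsub, by rw [hcard, 𝒯.card_eq _ hT]⟩
  have hcdq : ¬ Collinear ℝ {c, d, q} := by
    simpa [Set.insert_comm q c, Set.pair_comm q d] using 𝒯.not_collinear _ hT
  have hne : ∀ T' : Finset Pt, d ∈ T' → ({a, b, c} : Finset Pt) ≠ T' :=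
    fun T' hdT' hEq => hd (hEq ▸ hdT')
  rcases interior_triangle_inter_nonempty_of_convexPosition ha hb
    (by simpa using 𝒯.not_collinear _ habc) (by simpa using 𝒯.not_collinear _ habd) hcdq with
    hover | hover
  · exact hover.ne_empty (by simpa using 𝒯.interiors_disjoint _ habc _ habd (hne _ (by simp)))
  · refine hover.ne_empty ?_
    simpa [Set.insert_comm q c, Set.pair_comm q d] using
      𝒯.interiors_disjoint _ habc _ hT (hne _ (by simp))

end FlipStep

theorem Finset.card_powersetCard_two_union_le {α : Type*} [DecidableEq α] {T₁ T₂ e : Finset α}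
    (h₁ : T₁.card = 3) (h₂ : T₂.card = 3) (he₁ : e ⊆ T₁) (he₂ : e ⊆ T₂) (he : e.card = 2) :
    (T₁.powersetCard 2 ∪ T₂.powersetCard 2).card ≤ 5 := by
  have hunion := card_union_add_card_inter (T₁.powersetCard 2) (T₂.powersetCard 2)
  have hinter : 0 < (T₁.powersetCard 2 ∩ T₂.powersetCard 2).card :=
    card_pos.2 ⟨e, mem_inter.2 ⟨mem_powersetCard.2 ⟨he₁, he⟩, mem_powersetCard.2 ⟨he₂, he⟩⟩⟩
  rw [card_powersetCard, card_powersetCard, h₁, h₂] at hunion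
  have h32 : Nat.choose 3 2 = 3 := rfl
  omega

theorem Set.ncard_setOf_prod_eq_sum {α : Type*} [Fintype α] (R : α → α → Prop) :
    {p : α × α | R p.1 p.2}.ncard = ∑ j, {i | R i j}.ncard := by
  classical
  simp only [Set.ncard_eq_toFinset_card', Set.toFinset_ofPred, Finset.card_filter]
  exact Fintype.sum_prod_type_right _

namespace FlipSeq

variable {P : Finset Pt} {r : ℕ} (S : FlipSeq P r)

theorem isEdge_new_of_not_removed (i : Fin r) {n : ℕ} (hin : (i : ℕ) < n) (hn : n < r + 1)
    (hkeep : ∀ p : Fin r, i < p → (p : ℕ) < n → (S.flips p).old ≠ (S.flips i).new) :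
    (S.tri ⟨n, hn⟩).IsEdge (S.flips i).new := by
  induction n, hin using Nat.le_induction with
  | base => exact (S.step i).isEdge_new
  | succ n hin ih =>
    have hnr : n < r := by omega
    exact (S.step ⟨n, hnr⟩).isEdge_of_ne (ih (by omega) fun p hip hpn => hkeep p hip (by omega))
      (hkeep ⟨n, hnr⟩ hin n.lt_succ_self).symm

theorem new_ne_of_arc {u v j : Fin r} (hu : S.Arc u j) (hv : S.Arc v j) (huv : u < v) :
    (S.flips u).new ≠ (S.flips v).new := by
  intro heq
  have hkept := S.isEdge_new_of_not_removed u huv (by omega)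
    fun p hup hpv => hu.2.2 p hup (lt_trans hpv hv.1)
  rw [heq] at hkept
  exact (S.step v).not_isEdge_new hkept

theorem injOn_new_arc (j : Fin r) : Set.InjOn (fun i => (S.flips i).new) {i | S.Arc i j} := by
  intro u hu v hv heq
  rcases lt_trichotomy u v with huv | rfl | hvu
  · exact absurd heq (S.new_ne_of_arc hu hv huv)
  · rfl
  · exact absurd heq.symm (S.new_ne_of_arc hv hu hvu)

theorem ncard_arc_le (j : Fin r) : {i | S.Arc i j}.ncard ≤ 5 := by
  classical
  obtain ⟨T₁, hT₁, T₂, hT₂, -, hcard, hsub₁, hsub₂, huniq, -⟩ := S.step j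
  have hsides : ∀ i, S.Arc i j →
      (S.flips i).new ∈ T₁.powersetCard 2 ∪ T₂.powersetCard 2 := by
    rintro i ⟨-, heq | ⟨-, hcard', -, T, hT, hnewT, holdT⟩, -⟩
    · rw [heq]
      exact Finset.mem_union_left _ (Finset.mem_powersetCard.2 ⟨hsub₁, hcard⟩)
    · rcases huniq T hT holdT with rfl | rfl
      · exact Finset.mem_union_left _ (Finset.mem_powersetCard.2 ⟨hnewT, hcard'⟩)
      · exact Finset.mem_union_right _ (Finset.mem_powersetCard.2 ⟨hnewT, hcard'⟩)
  calc {i | S.Arc i j}.ncard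
      = ((fun i => (S.flips i).new) '' {i | S.Arc i j}).ncard :=
        (S.injOn_new_arc j).ncard_image.symm
    _ ≤ (T₁.powersetCard 2 ∪ T₂.powersetCard 2).card := by
      rw [← Set.ncard_coe_finset]
      exact Set.ncard_le_ncard (Set.image_subset_iff.2 hsides) (Finset.finite_toSet _)
    _ ≤ 5 := Finset.card_powersetCard_two_union_le ((S.tri _).card_eq _ hT₁)
      ((S.tri _).card_eq _ hT₂) hsub₁ hsub₂ hcard

end FlipSeq

/-- Let `T₀` be a triangulation of a finite point set `P` in the
plane and `F = ⟨f₁,…,f_r⟩` a valid sequence of flips with respect to `T₀`. Then every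
node of `D_F` has indegree at most `5`, and consequently the number of arcs of `D_F` is
at most `5` times the number `r` of nodes of `D_F`. -/
theorem statement10 {P : Finset Pt} {r : ℕ} (S : FlipSeq P r) :
    (∀ j : Fin r, {i : Fin r | S.Arc i j}.ncard ≤ 5) ∧
    {p : Fin r × Fin r | S.Arc p.1 p.2}.ncard ≤ 5 * r := by
  refine ⟨S.ncard_arc_le, ?_⟩
  calc {p : Fin r × Fin r | S.Arc p.1 p.2}.ncard
      = ∑ j, {i | S.Arc i j}.ncard := Set.ncard_setOf_prod_eq_sum S.Arc
    _ ≤ ∑ _j : Fin r, 5 := Finset.sum_le_sum fun j _ => S.ncard_arc_le j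
    _ = 5 * r := by simp [mul_comm]
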